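/- arXiv:2103.09000 — 9 statements merged into one kernel-verified Lean document; each statement's English description precedes it below -/
import Mathlib

section
/- Let A be a partial applicative poset. Then DA, the set of downwards closed subsets of A ordered by inclusion, with application defined by: α·β is defined iff a·b is defined for all a ∈ α, b ∈ β, in which case α·β is the downward closure of {a·b | a ∈ α, b ∈ β}, is again a partial applicative poset. -/
/-- Lifted (Kleene-style) application on possibly undefined expressions. -/
def OApp {A : Type*} (app : A → A → Option A) (x y : Option A) : Option A :=
  x.bind fun a => y.bind fun b => app a b

/-- Axiom (A) of a partial applicative poset: the application has downwards closed
domain and preserves the order. -/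
def PAPax {A : Type*} [PartialOrder A] (app : A → A → Option A) : Prop :=
  ∀ ⦃a' a b' b c : A⦄, a' ≤ a → b' ≤ b → app a b = some c →
    ∃ c', app a' b' = some c' ∧ c' ≤ c

/-- α ∈ BA: a partial function with downwards closed domain which is
order-preserving on its domain. -/
def IsBA {A : Type*} [PartialOrder A] (α : A → Option A) : Prop :=
  ∀ ⦃a b : A⦄, a ≤ b → ∀ ⦃c : A⦄, α b = some c → ∃ c', α a = some c' ∧ c' ≤ c

/-- The order on BA: α ≤ β iff whenever β(a) is defined, α(a) is defined and α(a) ≤ β(a). -/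
def BAle {A : Type*} [PartialOrder A] (α β : A → Option A) : Prop :=
  ∀ ⦃a c : A⦄, β a = some c → ∃ c', α a = some c' ∧ c' ≤ c

/-- The downwards closed subsets of `A`. -/
def DownSet (A : Type*) [PartialOrder A] : Type _ :=
  {s : Set A // ∀ ⦃x y : A⦄, x ≤ y → y ∈ s → x ∈ s}

instance {A : Type*} [PartialOrder A] : PartialOrder (DownSet A) :=
  Subtype.partialOrder _

open Classical in
/-- The application on `DA`: `α·β` is defined iff `a·b` is defined for all `a ∈ α`,
`b ∈ β`, in which case it is the downward closure of `{a·b | a ∈ α, b ∈ β}`. -/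
noncomputable def DApp {A : Type*} [PartialOrder A] (app : A → A → Option A)
    (α β : DownSet A) : Option (DownSet A) :=
  if ∀ a ∈ α.1, ∀ b ∈ β.1, ∃ c, app a b = some c then
    some ⟨{x | ∃ a ∈ α.1, ∃ b ∈ β.1, ∃ c, app a b = some c ∧ x ≤ c}, by
      rintro x y hxy ⟨a, ha, b, hb, c, hc, hyc⟩
      exact ⟨a, ha, b, hb, c, hc, hxy.trans hyc⟩⟩
  else none

/-- For a partial applicative poset `A`, the set `DA` of downwards
closed subsets ordered by inclusion, equipped with `DApp`, is again a partial
applicative poset. -/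
theorem DA_PAP {A : Type*} [PartialOrder A]
    (app : A → A → Option A) (hA : PAPax app) :
    PAPax (DApp app) := by
  intro α' α β' β γ hα hβ hγ
  unfold DApp at hγ ⊢
  split_ifs at hγ with h
-- h : totality condition for α, β
  have h' : ∀ a ∈ α'.1, ∀ b ∈ β'.1, ∃ c, app a b = some c := by
    intro a ha b hb
    obtain ⟨c, hc⟩ := h a (hα ha) b (hβ hb)
    obtain ⟨c', hc', _⟩ := hA le_rfl le_rfl hc
    exact ⟨c', hc'⟩
  rw [if_pos h']
  obtain rfl := Option.some.inj hγ
  refine ⟨_, rfl, ?_⟩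
  rintro x ⟨a, ha, b, hb, c, hc, hxc⟩
  exact ⟨a, hα ha, b, hβ hb, c, hc, hxc⟩
end

section
/- If A is a semitrivial PCA, then every two elements a, b ∈ A have a common lower bound. -/
/-- A (relative, ordered) partial combinatory algebra. -/
structure PCA (A : Type*) [PartialOrder A] where
  app : A → A → Option A
  mono : PAPax app
  filt : Set A
  filt_app : ∀ ⦃a⦄, a ∈ filt → ∀ ⦃b⦄, b ∈ filt → ∀ ⦃c⦄, app a b = some c → c ∈ filt
  filt_up : ∀ ⦃a⦄, a ∈ filt → ∀ ⦃b⦄, a ≤ b → b ∈ filt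
  k : A
  s : A
  k_mem : k ∈ filt
  s_mem : s ∈ filt
  k_spec : ∀ a b : A, ∃ c, OApp app (OApp app (some k) (some a)) (some b) = some c ∧ c ≤ a
  s_def : ∀ a b : A, ∃ c, OApp app (OApp app (some s) (some a)) (some b) = some c
  s_spec : ∀ a b c e : A,
    OApp app (OApp app (some a) (some c)) (OApp app (some b) (some c)) = some e →
    ∃ e', OApp app (OApp app (OApp app (some s) (some a)) (some b)) (some c) = some e' ∧ e' ≤ e

/-- In a semitrivial PCA (`⊤ = k` and `⊥ = k·(s·k·k)` have a common
lower bound), every two elements have a common lower bound. -/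
theorem semitrivial_common_lower_bound {A : Type u} [PartialOrder A] (P : PCA A)
    (i bot : A)
    (hi : OApp P.app (OApp P.app (some P.s) (some P.k)) (some P.k) = some i)
    (hbot : P.app P.k i = some bot)
    (hsemi : ∃ u : A, u ≤ P.k ∧ u ≤ bot) :
    ∀ a b : A, ∃ u : A, u ≤ a ∧ u ≤ b := by
  obtain ⟨u, huk, hub⟩ := hsemi
  intro a b
  have oapp_some : ∀ x y : A, OApp P.app (some x) (some y) = P.app x y := fun _ _ => rfl
  -- k·a
  obtain ⟨c0, hc0, hc0a⟩ := P.k_spec a b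
  obtain ⟨ka, hka, hkab⟩ : ∃ ka, P.app P.k a = some ka ∧ P.app ka b = some c0 := by
    rcases h : P.app P.k a with _ | ka
    · rw [show OApp P.app (some P.k) (some a) = P.app P.k a from rfl, h] at hc0
      simp [OApp] at hc0
    · rw [show OApp P.app (some P.k) (some a) = P.app P.k a from rfl, h, oapp_some] at hc0
      exact ⟨ka, rfl, hc0⟩
  -- k·b
  obtain ⟨cb, hcb, _⟩ := P.k_spec b b
  obtain ⟨kb, hkb⟩ : ∃ kb, P.app P.k b = some kb := by
    rcases h : P.app P.k b with _ | kb
    · rw [show OApp P.app (some P.k) (some b) = P.app P.k b from rfl, h] at hcb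
      simp [OApp] at hcb
    · exact ⟨kb, rfl⟩
  -- k·b·(k·b) = some e ≤ b
  obtain ⟨e, he, heb⟩ := P.k_spec b kb
  rw [show OApp P.app (some P.k) (some b) = P.app P.k b from rfl, hkb, oapp_some] at he
  -- s·k·k·b via s_spec
  have hskk : OApp P.app (OApp P.app (some P.k) (some b)) (OApp P.app (some P.k) (some b))
      = some e := by
    rw [show OApp P.app (some P.k) (some b) = P.app P.k b from rfl, hkb, oapp_some]
    exact he
  obtain ⟨e', he', he'e⟩ := P.s_spec P.k P.k b e hskk
  rw [hi, oapp_some] at he'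
  -- bot·a via k_spec i a
  obtain ⟨c, hc, hci⟩ := P.k_spec i a
  rw [show OApp P.app (some P.k) (some i) = P.app P.k i from rfl, hbot, oapp_some] at hc
  -- c·b ≤ e' ≤ b
  obtain ⟨d, hd, hde⟩ := P.mono hci (le_refl b) he'
  -- u·a
  obtain ⟨v, hv, hvka⟩ := P.mono huk (le_refl a) hka
  obtain ⟨v2, hv2, hv2c⟩ := P.mono hub (le_refl a) hc
  rw [hv] at hv2
  obtain rfl : v = v2 := Option.some.inj hv2
  -- v·b
  obtain ⟨w, hw, hwa⟩ := P.mono hvka (le_refl b) hkab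
  obtain ⟨w2, hw2, hw2d⟩ := P.mono hv2c (le_refl b) hd
  rw [hw] at hw2
  obtain rfl : w = w2 := Option.some.inj hw2
  exact ⟨w, le_trans hwa hc0a, le_trans hw2d (le_trans hde (le_trans he'e heb))⟩
end

section
/- Every partial applicative morphism f : A ⇀ B between PCAs is isomorphic to an order-preserving one: the map f'(a) = ⋃_{a' ≤ a} f(a') is a partial applicative morphism satisfying f ≃ f' and f'(a) ⊆ f'(a') whenever a ≤ a'. -/
/-- A partial applicative morphism between relative ordered PCAs. -/
structure PAM {A B : Type*} [PartialOrder A] [PartialOrder B]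
    (P : PCA A) (Q : PCA B) where
  map : A → Set B
  down : ∀ a : A, ∀ ⦃x y : B⦄, x ≤ y → y ∈ map a → x ∈ map a
  filt_ne : ∀ ⦃a⦄, a ∈ P.filt → ∃ b ∈ map a, b ∈ Q.filt
  track : ∃ t ∈ Q.filt, ∀ ⦃a a' c : A⦄, P.app a a' = some c →
    ∀ ⦃b⦄, b ∈ map a → ∀ ⦃b'⦄, b' ∈ map a' →
      ∃ d, OApp Q.app (OApp Q.app (some t) (some b)) (some b') = some d ∧ d ∈ map c
  ord : ∃ u ∈ Q.filt, (∀ a : A, ∀ ⦃b⦄, b ∈ map a → ∃ d, Q.app u b = some d) ∧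
    (∀ ⦃a a' : A⦄, a ≤ a' → ∀ ⦃b⦄, b ∈ map a → ∀ ⦃d⦄, Q.app u b = some d → d ∈ map a')

/-- `F ≤ G` as maps into downsets of `B`, realized by some element of the filter of `B`. -/
def RealLe {A B : Type*} [PartialOrder B] (Q : PCA B) (F G : A → Set B) : Prop :=
  ∃ s ∈ Q.filt, ∀ a : A, ∀ b ∈ F a, ∃ d, Q.app s b = some d ∧ d ∈ G a

/-- Computational density of a partial applicative morphism. -/
def CD {A B : Type*} [PartialOrder A] [PartialOrder B] {P : PCA A} {Q : PCA B}
    (f : PAM P Q) : Prop :=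
  ∃ n ∈ Q.filt, ∀ s ∈ Q.filt, ∃ r ∈ P.filt, ∀ b ∈ f.map r,
    ∃ d, Q.app n b = some d ∧ d ≤ s

/-- Every partial applicative morphism is isomorphic to an
order-preserving one, namely `f'(a) = ⋃_{a' ≤ a} f(a')`. -/
theorem iso_to_order_preserving {A B : Type*} [PartialOrder A] [PartialOrder B]
    {P : PCA A} {Q : PCA B} (f : PAM P Q) :
    ∃ g : PAM P Q,
      (∀ a : A, g.map a = {b : B | ∃ a' : A, a' ≤ a ∧ b ∈ f.map a'}) ∧
      RealLe Q f.map g.map ∧ RealLe Q g.map f.map ∧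
      (∀ ⦃a a' : A⦄, a ≤ a' → g.map a ⊆ g.map a') := by
  obtain ⟨u, hu, hud, huo⟩ := f.ord
  obtain ⟨t, ht, htr⟩ := f.track
  refine ⟨{ map := fun a => {b : B | ∃ a' : A, a' ≤ a ∧ b ∈ f.map a'}
          , down := ?_, filt_ne := ?_, track := ?_, ord := ?_ },
    fun a => rfl, ?_, ?_, ?_⟩
  · rintro a x y hxy ⟨a', ha', hy⟩
    exact ⟨a', ha', f.down a' hxy hy⟩
  · intro a ha
    obtain ⟨b, hb, hbf⟩ := f.filt_ne ha
    exact ⟨b, ⟨a, le_refl a, hb⟩, hbf⟩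
  · refine ⟨t, ht, ?_⟩
    rintro a a' c hc b ⟨a₁, ha₁, hb⟩ b' ⟨a₁', ha₁', hb'⟩
    obtain ⟨c₁, hc₁, hc₁le⟩ := P.mono ha₁ ha₁' hc
    obtain ⟨d, hd, hdm⟩ := htr hc₁ hb hb'
    exact ⟨d, hd, ⟨c₁, hc₁le, hdm⟩⟩
  · refine ⟨u, hu, ?_, ?_⟩
    · rintro a b ⟨a₁, ha₁, hb⟩
      exact hud a₁ hb
    · rintro a a' haa b ⟨a₁, ha₁, hb⟩ d hd
      exact ⟨a', le_refl a', huo (ha₁.trans haa) hb hd⟩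
  · refine ⟨u, hu, ?_⟩
    intro a b hb
    obtain ⟨d, hd⟩ := hud a hb
    exact ⟨d, hd, ⟨a, le_refl a, huo (le_refl a) hb hd⟩⟩
  · refine ⟨u, hu, ?_⟩
    rintro a b ⟨a₁, ha₁, hb⟩
    obtain ⟨d, hd⟩ := hud a₁ hb
    exact ⟨d, hd, huo ha₁ hb hd⟩
  · rintro a a' h b ⟨a₁, h₁, hb⟩
    exact ⟨a₁, h₁.trans h, hb⟩
end

section
/- Let f : A ⇀ B and g : B ⇀ C be partial applicative morphisms between PCAs. If the composite g∘f (defined by (g∘f)(a) = ⋃_{b ∈ f(a)} g(b)) is computationally dense, then g is computationally dense. -/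
/-- If the composite `g∘f` of partial applicative morphisms is
computationally dense, then so is `g`. -/
theorem cd_of_comp_cd {A B C : Type*} [PartialOrder A] [PartialOrder B] [PartialOrder C]
    {P : PCA A} {Q : PCA B} {R : PCA C}
    (f : PAM P Q) (g : PAM Q R) (gf : PAM P R)
    (hgf : ∀ a : A, gf.map a = {c : C | ∃ b ∈ f.map a, c ∈ g.map b})
    (hcd : CD gf) : CD g := by
  obtain ⟨n, hn, hns⟩ := hcd
  refine ⟨n, hn, fun s hs => ?_⟩
  obtain ⟨r, hr, hrs⟩ := hns s hs
  obtain ⟨b, hbf, hbQ⟩ := f.filt_ne hr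
  refine ⟨b, hbQ, fun c hc => ?_⟩
  exact hrs c (by rw [hgf]; exact ⟨b, hbf, hc⟩)
end

section
/- Let A be a PCA, r ∈ A, and A[r] the PCA with the same underlying applicative structure but filter F_r = ⟨A# ∪ {r}⟩. The identity-on-elements morphism ι_r : A → A[r], ι_r(a) = ↓{a}, is computationally dense: the element n = λ*x.x·r ∈ F_r satisfies that for every s ∈ F_r there is q ∈ A# with n·ι_r(q) ⊆ ↓{s}. -/
/-- A filter on a partial applicative poset: non-empty, closed under defined
application, and upwards closed. -/
def IsFilter {A : Type*} [PartialOrder A] (app : A → A → Option A) (F : Set A) : Prop :=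
  F.Nonempty ∧
  (∀ ⦃a⦄, a ∈ F → ∀ ⦃b⦄, b ∈ F → ∀ ⦃c⦄, app a b = some c → c ∈ F) ∧
  (∀ ⦃a⦄, a ∈ F → ∀ ⦃b⦄, a ≤ b → b ∈ F)

/-- The filter generated by a subset: the intersection of all filters containing it. -/
def genFilter {A : Type*} [PartialOrder A] (app : A → A → Option A) (X : Set A) : Set A :=
  ⋂₀ {F : Set A | IsFilter app F ∧ X ⊆ F}


private lemma tri_unfold {A : Type*} (app : A → A → Option A) {a b c d : A}
    (h : OApp app (OApp app (some a) (some b)) (some c) = some d) :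
    ∃ u, app a b = some u ∧ app u c = some d := by
  simp only [OApp, Option.bind_some] at h
  cases hab : app a b with
  | none => rw [hab] at h; simp at h
  | some u => rw [hab] at h; simp only [Option.bind_some] at h; exact ⟨u, rfl, h⟩

private lemma quad_unfold {A : Type*} (app : A → A → Option A) {s a b c e : A}
    (h : OApp app (OApp app (OApp app (some s) (some a)) (some b)) (some c) = some e) :
    ∃ u v, app s a = some u ∧ app u b = some v ∧ app v c = some e := by
  simp only [OApp, Option.bind_some] at h
  cases hsa : app s a with
  | none => rw [hsa] at h; simp at h
  | some u =>
    rw [hsa] at h; simp only [Option.bind_some] at h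
    cases hub : app u b with
    | none => rw [hub] at h; simp at h
    | some v =>
      rw [hub] at h; simp only [Option.bind_some] at h
      exact ⟨u, v, rfl, hub, h⟩

private lemma tri_fold {A : Type*} (app : A → A → Option A) {a b c u d : A}
    (h1 : app a b = some u) (h2 : app u c = some d) :
    OApp app (OApp app (some a) (some b)) (some c) = some d := by
  simp only [OApp, Option.bind_some, h1, h2]

/-- The identity-on-elements morphism `ι_r : A → A[r]`, where
`A[r]` has filter `F_r = ⟨A# ∪ {r}⟩`, is computationally dense: there is
`n ∈ F_r` such that for every `s ∈ F_r` there is `q ∈ A#` with `n·ι_r(q) ⊆ ↓{s}`.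
(Here `ι_r(q) = ↓{q}`.) -/
theorem iota_r_cd {A : Type*} [PartialOrder A] (P : PCA A) (r : A) :
    ∃ n ∈ genFilter P.app (insert r P.filt),
      ∀ s ∈ genFilter P.app (insert r P.filt),
        ∃ q ∈ P.filt, ∀ b : A, b ≤ q → ∃ d, P.app n b = some d ∧ d ≤ s := by
  classical
  -- basic combinators
  have hkk := P.k_spec
  -- I := s k k
  obtain ⟨c0, hc0, hle0⟩ := hkk P.k P.k
  obtain ⟨kk, hkk1, _⟩ := tri_unfold P.app hc0
  obtain ⟨c1, hc1⟩ := P.s_def P.k P.k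
  obtain ⟨sk, hsk, hskk⟩ := tri_unfold P.app hc1
  set i := c1 with hi
  have hi_mem : i ∈ P.filt := by
    have hsk_mem : sk ∈ P.filt := P.filt_app P.s_mem P.k_mem hsk
    exact P.filt_app hsk_mem P.k_mem hskk
  -- I b ≤ b for all b
  have hI : ∀ b : A, ∃ b', P.app i b = some b' ∧ b' ≤ b := by
    intro b
    obtain ⟨cb, hcb, hcble⟩ := hkk b b
    obtain ⟨kb, hkb, hkbb⟩ := tri_unfold P.app hcb
    obtain ⟨cb2, hcb2, hcb2le⟩ := hkk b kb
    obtain ⟨kb', hkb', hkbkb⟩ := tri_unfold P.app hcb2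
    rw [hkb] at hkb'; injection hkb' with e; subst e
    have hh : OApp P.app (OApp P.app (some P.k) (some b))
        (OApp P.app (some P.k) (some b)) = some cb2 := by
      simp only [OApp, Option.bind_some, hkb, hkbkb]
    obtain ⟨e', he', he'le⟩ := P.s_spec P.k P.k b cb2 hh
    obtain ⟨u, v, hu, hv, hw⟩ := quad_unfold P.app he'
    rw [hsk] at hu; injection hu with e; subst e
    rw [hskk] at hv; injection hv with e; subst e
    exact ⟨e', hw, le_trans he'le hcb2le⟩
  -- kr := k r
  obtain ⟨cr, hcr, _⟩ := hkk r r
  obtain ⟨kr, hkr, hkrr⟩ := tri_unfold P.app hcr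
  have hKr : ∀ b : A, ∃ d, P.app kr b = some d ∧ d ≤ r := by
    intro b
    obtain ⟨c, hc, hcle⟩ := hkk r b
    obtain ⟨kr', hkr', hk2⟩ := tri_unfold P.app hc
    rw [hkr] at hkr'; injection hkr' with e; subst e
    exact ⟨c, hk2, hcle⟩
  -- n := s i kr
  obtain ⟨c2, hc2⟩ := P.s_def i kr
  obtain ⟨si, hsi, hsikr⟩ := tri_unfold P.app hc2
  set n := c2 with hn
  -- key property of n : if b·r = some d then n·b ≤ d
  have hN : ∀ b d : A, P.app b r = some d → ∃ e, P.app n b = some e ∧ e ≤ d := by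
    intro b d hbr
    obtain ⟨b', hib, hb'le⟩ := hI b
    obtain ⟨r', hkrb, hr'le⟩ := hKr b
    obtain ⟨d2, hd2, hd2le⟩ := P.mono hb'le hr'le hbr
    have hh : OApp P.app (OApp P.app (some i) (some b))
        (OApp P.app (some kr) (some b)) = some d2 := by
      simp only [OApp, Option.bind_some, hib, hkrb, hd2]
    obtain ⟨e', he', he'le⟩ := P.s_spec i kr b d2 hh
    obtain ⟨u, v, hu, hv, hw⟩ := quad_unfold P.app he'
    rw [hsi] at hu; injection hu with e; subst e
    rw [hsikr] at hv; injection hv with e; subst e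
    exact ⟨e', hw, le_trans he'le hd2le⟩
  -- n belongs to the generated filter
  have hn_mem : n ∈ genFilter P.app (insert r P.filt) := by
    intro F hF
    obtain ⟨⟨_, happ, _⟩, hsub⟩ := hF
    have hrF : r ∈ F := hsub (Set.mem_insert r P.filt)
    have hkF : P.k ∈ F := hsub (Set.mem_insert_of_mem r P.k_mem)
    have hsF : P.s ∈ F := hsub (Set.mem_insert_of_mem r P.s_mem)
    have hskF : sk ∈ F := happ hsF hkF hsk
    have hiF : i ∈ F := happ hskF hkF hskk
    have hkrF : kr ∈ F := happ hkF hrF hkr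
    have hsiF : si ∈ F := happ hsF hiF hsi
    exact happ hsiF hkrF hsikr
  refine ⟨n, hn_mem, ?_⟩
  -- the set G
  set G : Set A := {x : A | ∃ q ∈ P.filt, ∃ d, P.app q r = some d ∧ d ≤ x} with hG
  have hrG : r ∈ G := by
    obtain ⟨r', hir, hr'le⟩ := hI r
    exact ⟨i, hi_mem, r', hir, hr'le⟩
  have hGfilter : IsFilter P.app G := by
    refine ⟨⟨r, hrG⟩, ?_, ?_⟩
    · rintro a ⟨q1, hq1, d1, hd1, hd1le⟩ b ⟨q2, hq2, d2, hd2, hd2le⟩ c hc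
      obtain ⟨c', hc', hc'le⟩ := P.mono hd1le hd2le hc
      have hh : OApp P.app (OApp P.app (some q1) (some r))
          (OApp P.app (some q2) (some r)) = some c' := by
        simp only [OApp, Option.bind_some, hd1, hd2, hc']
      obtain ⟨e', he', he'le⟩ := P.s_spec q1 q2 r c' hh
      obtain ⟨u, v, hu, hv, hw⟩ := quad_unfold P.app he'
      have huF : u ∈ P.filt := P.filt_app P.s_mem hq1 hu
      have hvF : v ∈ P.filt := P.filt_app huF hq2 hv
      exact ⟨v, hvF, e', hw, le_trans he'le hc'le⟩
    · rintro a ⟨q, hq, d, hd, hdle⟩ b hab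
      exact ⟨q, hq, d, hd, le_trans hdle hab⟩
  have hsubG : insert r P.filt ⊆ G := by
    rintro x hx
    rcases hx with rfl | hx
    · exact hrG
    · obtain ⟨c, hc, hcle⟩ := hkk x x
      obtain ⟨kx, hkx, _⟩ := tri_unfold P.app hc
      have hkxF : kx ∈ P.filt := P.filt_app P.k_mem hx hkx
      obtain ⟨c2, hc2', hc2le⟩ := hkk x r
      obtain ⟨kx', hkx', hk2⟩ := tri_unfold P.app hc2'
      rw [hkx] at hkx'; injection hkx' with e; subst e
      exact ⟨kx, hkxF, c2, hk2, hc2le⟩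
  intro t ht
  have htG : t ∈ G := ht G ⟨hGfilter, hsubG⟩
  obtain ⟨q, hq, d0, hd0, hd0le⟩ := htG
  refine ⟨q, hq, ?_⟩
  intro b hb
  obtain ⟨d1, hd1, hd1le⟩ := P.mono hb (le_refl r) hd0
  obtain ⟨e, he, hele⟩ := hN b d1 hd1
  exact ⟨e, he, le_trans hele (le_trans hd1le hd0le)⟩
end

section
/- Let A be a PCA, r ∈ A, and define h : A[r] → A by h(a) = {b ∈ A | b·r is defined and ≤ a}. Then h is a total applicative morphism, and ι_r ⊣ h in the preorder-enriched category of PCAs, with ι_r ∘ h ≃ id_{A[r]}. Specifically: k realizes both id_A ≤ h∘ι_r and id_{A[r]} ≤ ι_r∘h, while λ*x.x·r ∈ F_r realizes ι_r∘h ≤ id_{A[r]}. -/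
section RAux

variable {A : Type*}

theorem oapp_some (app : A → A → Option A) (a b : A) :
    OApp app (some a) (some b) = app a b := rfl

theorem oapp_eq_some {app : A → A → Option A} {x y : Option A} {c : A}
    (h : OApp app x y = some c) :
    ∃ a b, x = some a ∧ y = some b ∧ app a b = some c := by
  cases x with
  | none => simp [OApp] at h
  | some a =>
    cases y with
    | none => simp [OApp] at h
    | some b => exact ⟨a, b, rfl, rfl, h⟩

end RAux

/-- For `h : A[r] → A`, `h(a) = {b | b·r defined and ≤ a}`:
`h` is a total applicative morphism from `A[r]` (same application, filter
`F_r = ⟨A# ∪ {r}⟩`) to `A`, and `ι_r ⊣ h` with `ι_r ∘ h ≃ id_{A[r]}`: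
`k` realizes `id_A ≤ h∘ι_r` and `id_{A[r]} ≤ ι_r∘h`, and an element
`n = λ*x.x·r` of `F_r` realizes `ι_r∘h ≤ id_{A[r]}`. -/
theorem right_adjoint_of_iota_r {A : Type*} [PartialOrder A] (P : PCA A) (r : A)
    (Fr : Set A) (hFr : Fr = genFilter P.app (insert r P.filt))
    (hmap : A → Set A)
    (hhmap : ∀ a : A, hmap a = {b : A | ∃ d, P.app b r = some d ∧ d ≤ a}) :
    -- h takes values in downsets
    (∀ a : A, ∀ ⦃x y : A⦄, x ≤ y → y ∈ hmap a → x ∈ hmap a) ∧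
    -- filter condition: h(a) meets A# for every a ∈ F_r
    (∀ a ∈ Fr, ∃ b ∈ hmap a, b ∈ P.filt) ∧
    -- tracker in A#
    (∃ t ∈ P.filt, ∀ ⦃a a' c : A⦄, P.app a a' = some c →
      ∀ ⦃b⦄, b ∈ hmap a → ∀ ⦃b'⦄, b' ∈ hmap a' →
        ∃ d, OApp P.app (OApp P.app (some t) (some b)) (some b') = some d ∧ d ∈ hmap c) ∧
    -- order-preservation up to a realizer in A#
    (∃ u ∈ P.filt, (∀ a : A, ∀ ⦃b⦄, b ∈ hmap a → ∃ d, P.app u b = some d) ∧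
      (∀ ⦃a a' : A⦄, a ≤ a' → ∀ ⦃b⦄, b ∈ hmap a → ∀ ⦃d⦄, P.app u b = some d → d ∈ hmap a')) ∧
    -- totality
    (∀ a : A, (hmap a).Nonempty) ∧
    -- k realizes id_A ≤ h∘ι_r
    (∀ a : A, ∀ b : A, b ≤ a → ∃ d, P.app P.k b = some d ∧
      ∃ a' : A, a' ≤ a ∧ d ∈ hmap a') ∧
    -- k (which lies in F_r) realizes id_{A[r]} ≤ ι_r∘h
    (P.k ∈ Fr ∧ ∀ a : A, ∀ b : A, b ≤ a → ∃ d, P.app P.k b = some d ∧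
      ∃ b' ∈ hmap a, d ≤ b') ∧
    -- λ*x.x·r ∈ F_r realizes ι_r∘h ≤ id_{A[r]}
    (∃ n ∈ Fr, (∀ b c : A, P.app b r = some c → ∃ d, P.app n b = some d ∧ d ≤ c) ∧
      (∀ a : A, ∀ x : A, (∃ b' ∈ hmap a, x ≤ b') → ∃ d, P.app n x = some d ∧ d ≤ a)) := by

  subst hFr
  -- membership in hmap
  have hmem : ∀ a b : A, b ∈ hmap a ↔ ∃ d, P.app b r = some d ∧ d ≤ a := by
    intro a b; rw [hhmap]; rfl
  -- basic k facts
  have hk_app : ∀ a : A, ∃ c, P.app P.k a = some c := by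
    intro a
    obtain ⟨c, hc, -⟩ := P.k_spec a a
    obtain ⟨x, y, hx, -, -⟩ := oapp_eq_some hc
    exact ⟨x, hx⟩
  have hk_red : ∀ a b : A, ∀ ⦃ka : A⦄, P.app P.k a = some ka →
      ∃ d, P.app ka b = some d ∧ d ≤ a := by
    intro a b ka hka
    obtain ⟨c, hc, hle⟩ := P.k_spec a b
    rw [oapp_some, hka, oapp_some] at hc
    exact ⟨c, hc, hle⟩
  -- basic s facts
  have hs_def' : ∀ a b : A, ∃ sa sab, P.app P.s a = some sa ∧ P.app sa b = some sab := by
    intro a b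
    obtain ⟨c, hc⟩ := P.s_def a b
    obtain ⟨x, y, hx, hy, hxy⟩ := oapp_eq_some hc
    injection hy with hy
    subst hy
    exact ⟨x, c, hx, hxy⟩
  have hs_spec' : ∀ a b c e sa sab : A, P.app P.s a = some sa → P.app sa b = some sab →
      OApp P.app (OApp P.app (some a) (some c)) (OApp P.app (some b) (some c)) = some e →
      ∃ e', P.app sab c = some e' ∧ e' ≤ e := by
    intro a b c e sa sab hsa hsab hred
    obtain ⟨e', he', hle⟩ := P.s_spec a b c e hred
    rw [oapp_some, hsa, oapp_some, hsab, oapp_some] at he'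
    exact ⟨e', he', hle⟩
  -- the identity combinator i = s k k
  obtain ⟨sk, i, hsk, hski⟩ := hs_def' P.k P.k
  have hi_mem : i ∈ P.filt := P.filt_app (P.filt_app P.s_mem P.k_mem hsk) P.k_mem hski
  have hi_red : ∀ x : A, ∃ d, P.app i x = some d ∧ d ≤ x := by
    intro x
    obtain ⟨kx, hkx⟩ := hk_app x
    obtain ⟨e, he, hle⟩ := hk_red x kx hkx
    have hred : OApp P.app (OApp P.app (some P.k) (some x))
        (OApp P.app (some P.k) (some x)) = some e := by
      rw [oapp_some, hkx, oapp_some]; exact he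
    obtain ⟨e', he', hle'⟩ := hs_spec' P.k P.k x e sk i hsk hski hred
    exact ⟨e', he', hle'.trans hle⟩
  -- n = λ* x. x r  built as  s i (k r)
  obtain ⟨kr, hkr⟩ := hk_app r
  obtain ⟨si, n, hsi, hsin⟩ := hs_def' i kr
  have hn_red : ∀ x c : A, P.app x r = some c → ∃ d, P.app n x = some d ∧ d ≤ c := by
    intro x c hxr
    obtain ⟨d1, hd1, hd1le⟩ := hi_red x
    obtain ⟨d2, hd2, hd2le⟩ := hk_red r x hkr
    obtain ⟨c', hc', hc'le⟩ := P.mono hd1le hd2le hxr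
    have hred : OApp P.app (OApp P.app (some i) (some x))
        (OApp P.app (some kr) (some x)) = some c' := by
      rw [oapp_some, hd1, oapp_some, hd2, oapp_some]; exact hc'
    obtain ⟨d, hd, hdle⟩ := hs_spec' i kr x c' si n hsi hsin hred
    exact ⟨d, hd, hdle.trans hc'le⟩
  -- membership in Fr
  have hmemFr : ∀ x, x ∈ insert r P.filt → x ∈ genFilter P.app (insert r P.filt) := by
    intro x hx
    exact Set.mem_sInter.mpr fun G hG => hG.2 hx
  have hr_Fr : r ∈ genFilter P.app (insert r P.filt) := hmemFr r (Set.mem_insert _ _)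
  have hfilt_Fr : ∀ x ∈ P.filt, x ∈ genFilter P.app (insert r P.filt) :=
    fun x hx => hmemFr x (Set.mem_insert_of_mem _ hx)
  have hFr_app : ∀ a ∈ genFilter P.app (insert r P.filt),
      ∀ b ∈ genFilter P.app (insert r P.filt),
      ∀ c, P.app a b = some c → c ∈ genFilter P.app (insert r P.filt) := by
    intro a ha b hb c hc
    exact Set.mem_sInter.mpr fun G hG =>
      hG.1.2.1 (Set.mem_sInter.mp ha G hG) (Set.mem_sInter.mp hb G hG) hc
  have hn_Fr : n ∈ genFilter P.app (insert r P.filt) := by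
    have hs := hfilt_Fr P.s P.s_mem
    have hk := hfilt_Fr P.k P.k_mem
    have h1 := hFr_app _ hs _ hk _ hsk
    have h2 := hFr_app _ h1 _ hk _ hski
    have h3 := hFr_app _ hk _ hr_Fr _ hkr
    have h4 := hFr_app _ hs _ h2 _ hsi
    exact hFr_app _ h4 _ h3 _ hsin
  refine ⟨?_, ?_, ?_, ?_, ?_, ?_, ?_, ?_⟩
  · -- downset
    intro a x y hxy hy
    rw [hmem] at hy ⊢
    obtain ⟨d, hd, hdle⟩ := hy
    obtain ⟨d', hd', hd'le⟩ := P.mono hxy (le_refl r) hd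
    exact ⟨d', hd', hd'le.trans hdle⟩
  · -- filter condition
    intro a ha
    set G : Set A := {a : A | ∃ b ∈ P.filt, ∃ d, P.app b r = some d ∧ d ≤ a} with hG
    have hGfilt : IsFilter P.app G := by
      refine ⟨⟨r, ?_⟩, ?_, ?_⟩
      · obtain ⟨d, hd, hdle⟩ := hi_red r
        exact ⟨i, hi_mem, d, hd, hdle⟩
      · rintro x ⟨b, hb, d, hbr, hdx⟩ y ⟨b', hb', d', hb'r, hd'y⟩ c hc
        obtain ⟨c'', hc'', hc''le⟩ := P.mono hdx hd'y hc
        obtain ⟨sb, sbb', hsb, hsbb'⟩ := hs_def' b b'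
        have hred : OApp P.app (OApp P.app (some b) (some r))
            (OApp P.app (some b') (some r)) = some c'' := by
          rw [oapp_some, hbr, oapp_some, hb'r, oapp_some]; exact hc''
        obtain ⟨e, he, hele⟩ := hs_spec' b b' r c'' sb sbb' hsb hsbb' hred
        exact ⟨sbb', P.filt_app (P.filt_app P.s_mem hb hsb) hb' hsbb',
          e, he, hele.trans hc''le⟩
      · rintro x ⟨b, hb, d, hbr, hdx⟩ y hxy
        exact ⟨b, hb, d, hbr, hdx.trans hxy⟩
    have hsub : insert r P.filt ⊆ G := by
      rintro x (rfl | hx)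
      · obtain ⟨d, hd, hdle⟩ := hi_red x
        exact ⟨i, hi_mem, d, hd, hdle⟩
      · obtain ⟨kx, hkx⟩ := hk_app x
        obtain ⟨d, hd, hdle⟩ := hk_red x r hkx
        exact ⟨kx, P.filt_app P.k_mem hx hkx, d, hd, hdle⟩
    have hGin : G ∈ {F : Set A | IsFilter P.app F ∧ insert r P.filt ⊆ F} := ⟨hGfilt, hsub⟩
    have haG : a ∈ G := Set.sInter_subset_of_mem hGin ha
    obtain ⟨b, hb, d, hbr, hdle⟩ := haG
    exact ⟨b, (hmem a b).mpr ⟨d, hbr, hdle⟩, hb⟩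
  · -- tracker t = s
    refine ⟨P.s, P.s_mem, ?_⟩
    intro a a' c hc b hb b' hb'
    rw [hmem] at hb hb'
    obtain ⟨e, hbr, hea⟩ := hb
    obtain ⟨e', hb'r, he'a'⟩ := hb'
    obtain ⟨c'', hc'', hc''le⟩ := P.mono hea he'a' hc
    obtain ⟨sb, sbb', hsb, hsbb'⟩ := hs_def' b b'
    have hred : OApp P.app (OApp P.app (some b) (some r))
        (OApp P.app (some b') (some r)) = some c'' := by
      rw [oapp_some, hbr, oapp_some, hb'r, oapp_some]; exact hc''
    obtain ⟨d, hd, hdle⟩ := hs_spec' b b' r c'' sb sbb' hsb hsbb' hred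
    refine ⟨sbb', ?_, (hmem c sbb').mpr ⟨d, hd, hdle.trans hc''le⟩⟩
    rw [oapp_some, hsb, oapp_some]; exact hsbb'
  · -- order-preservation realizer u = i
    refine ⟨i, hi_mem, ?_, ?_⟩
    · intro a b hb
      obtain ⟨d, hd, -⟩ := hi_red b
      exact ⟨d, hd⟩
    · intro a a' haa' b hb d hd
      rw [hmem] at hb ⊢
      obtain ⟨e, hbr, hea⟩ := hb
      obtain ⟨d0, hd0, hd0le⟩ := hi_red b
      rw [hd0] at hd
      injection hd with hd
      subst hd
      obtain ⟨e'', he'', he''le⟩ := P.mono hd0le (le_refl r) hbr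
      exact ⟨e'', he'', he''le.trans (hea.trans haa')⟩
  · -- totality
    intro a
    obtain ⟨ka, hka⟩ := hk_app a
    obtain ⟨d, hd, hdle⟩ := hk_red a r hka
    exact ⟨ka, (hmem a ka).mpr ⟨d, hd, hdle⟩⟩
  · -- k realizes id_A ≤ h ∘ ι_r
    intro a b hba
    obtain ⟨kb, hkb⟩ := hk_app b
    obtain ⟨d, hd, hdle⟩ := hk_red b r hkb
    exact ⟨kb, hkb, a, le_refl a, (hmem a kb).mpr ⟨d, hd, hdle.trans hba⟩⟩
  · -- k realizes id_{A[r]} ≤ ι_r ∘ h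
    refine ⟨hfilt_Fr P.k P.k_mem, ?_⟩
    intro a b hba
    obtain ⟨kb, hkb⟩ := hk_app b
    obtain ⟨d, hd, hdle⟩ := hk_red b r hkb
    exact ⟨kb, hkb, kb, (hmem a kb).mpr ⟨d, hd, hdle.trans hba⟩, le_refl kb⟩
  · -- n realizes ι_r ∘ h ≤ id_{A[r]}
    refine ⟨n, hn_Fr, fun b c hbc => hn_red b c hbc, ?_⟩
    intro a x hx
    obtain ⟨b', hb', hxb'⟩ := hx
    rw [hmem] at hb'
    obtain ⟨e, hb'r, hea⟩ := hb'
    obtain ⟨e', he', he'le⟩ := P.mono hxb' (le_refl r) hb'r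
    obtain ⟨d, hd, hdle⟩ := hn_red x e' he'
    exact ⟨d, hd, hdle.trans (he'le.trans hea)⟩
end

section
/- Let A be a non-semitrivial PCA and f ∈ BA (a partial order-respecting function A ⇀ A). Then the oracle application a ⊙_f b (defined via b-interrogations of f by a) is deterministic: for each a, b there is at most one c with a ⊙_f b = c, and A[f] = (A, ⊙_f, ≤) is a partial applicative poset, i.e., a' ≤ a and b' ≤ b with a ⊙_f b defined imply a' ⊙_f b' defined and a' ⊙_f b' ≤ a ⊙_f b. -/
/-- A `b`-interrogation of the oracle `f` by `a`: the list `us` of answers returned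
by the oracle in the course of the computation. -/
def Interrog {A : Type*} [PartialOrder A] (P : PCA A) (code : List A → A)
    (p₀ p₁ bot : A) (f : A → Option A) (a b : A) (us : List A) : Prop :=
  ∀ i : Fin us.length, ∃ x y z : A,
    P.app a (code (b :: us.take i)) = some x ∧
    P.app p₀ x = some y ∧ y ≤ bot ∧
    P.app p₁ x = some z ∧ f z = some (us.get i)

/-- The oracle application: `a ⊙_f b = c`. -/
def OdotEq {A : Type*} [PartialOrder A] (P : PCA A) (code : List A → A)
    (p₀ p₁ top bot : A) (f : A → Option A) (a b c : A) : Prop :=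
  ∃ us : List A, Interrog P code p₀ p₁ bot f a b us ∧
    ∃ x y : A, P.app a (code (b :: us)) = some x ∧
      P.app p₀ x = some y ∧ y ≤ top ∧ P.app p₁ x = some c

private lemma interrog_take_eq {A : Type*} [PartialOrder A] (P : PCA A) (code : List A → A)
    {p₀ p₁ bot : A} {f : A → Option A} {a b : A} {us vs : List A}
    (hus : Interrog P code p₀ p₁ bot f a b us)
    (hvs : Interrog P code p₀ p₁ bot f a b vs) :
    ∀ n, n ≤ us.length → n ≤ vs.length → us.take n = vs.take n := by
  intro n
  induction n with
  | zero => simp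
  | succ n ih =>
    intro h1 h2
    have h1' : n < us.length := h1
    have h2' : n < vs.length := h2
    have heq := ih (le_of_lt h1') (le_of_lt h2')
    obtain ⟨x, y, z, hx, hy, hyb, hz, hfz⟩ := hus ⟨n, h1'⟩
    obtain ⟨x', y', z', hx', hy', hyb', hz', hfz'⟩ := hvs ⟨n, h2'⟩
    simp only at hx hx' hz hz' hfz hfz'
    rw [heq] at hx
    have hxx : x = x' := by rw [hx] at hx'; exact Option.some.inj hx'
    subst hxx
    have hzz : z = z' := by rw [hz] at hz'; exact Option.some.inj hz'
    subst hzz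
    have hget : us.get ⟨n, h1'⟩ = vs.get ⟨n, h2'⟩ := by
      rw [hfz] at hfz'; exact Option.some.inj hfz'
    simp only [List.get_eq_getElem] at hget
    rw [List.take_succ, List.take_succ, heq, List.getElem?_eq_getElem h1',
      List.getElem?_eq_getElem h2', hget]

private lemma interrog_eq {A : Type*} [PartialOrder A] (P : PCA A) (code : List A → A)
    {top p₀ p₁ bot : A} {f : A → Option A} {a b : A} {us vs : List A}
    (hnontriv : ¬ ∃ u : A, u ≤ top ∧ u ≤ bot)
    (hus : Interrog P code p₀ p₁ bot f a b us)
    (hvs : Interrog P code p₀ p₁ bot f a b vs)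
    {x y : A} (hx : P.app a (code (b :: us)) = some x)
    (hy : P.app p₀ x = some y) (hyt : y ≤ top)
    (hlen : us.length ≤ vs.length) : us = vs := by
  have heq : us = vs.take us.length := by
    have := interrog_take_eq P code hus hvs us.length le_rfl hlen
    simpa using this
  rcases eq_or_lt_of_le hlen with hl | hl
  · rw [heq, hl, List.take_length]
  · exfalso
    obtain ⟨x', y', z', hx', hy', hyb', hz', hfz'⟩ := hvs ⟨us.length, hl⟩
    simp only at hx'
    rw [← heq] at hx'
    have hxx : x = x' := by rw [hx] at hx'; exact Option.some.inj hx'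
    subst hxx
    have hyy : y = y' := by rw [hy] at hy'; exact Option.some.inj hy'
    subst hyy
    exact hnontriv ⟨y, hyt, hyb'⟩

private lemma interrog_mono {A : Type*} [PartialOrder A] (P : PCA A) (code : List A → A)
    (hcode : ∀ l l' : List A, List.Forall₂ (· ≤ ·) l' l → code l' ≤ code l)
    {p₀ p₁ bot : A} {f : A → Option A} (hf : IsBA f)
    {a' a b' b : A} (ha : a' ≤ a) (hb : b' ≤ b)
    {us : List A} (hus : Interrog P code p₀ p₁ bot f a b us) :
    ∀ n, n ≤ us.length → ∃ us' : List A, Interrog P code p₀ p₁ bot f a' b' us' ∧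
      List.Forall₂ (· ≤ ·) us' (us.take n) := by
  intro n
  induction n with
  | zero =>
    intro _
    refine ⟨[], fun i => absurd i.2 (by simp), by simp⟩
  | succ n ih =>
    intro h1
    have h1' : n < us.length := h1
    obtain ⟨us', hI, hF⟩ := ih (le_of_lt h1')
    have hlen' : us'.length = n := by
      have := hF.length_eq
      rwa [List.length_take, Nat.min_eq_left (le_of_lt h1')] at this
    obtain ⟨x, y, z, hx, hy, hyb, hz, hfz⟩ := hus ⟨n, h1'⟩
    simp only at hx hz hfz
    have hc : code (b' :: us') ≤ code (b :: us.take n) :=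
      hcode _ _ (List.Forall₂.cons hb hF)
    obtain ⟨x', hx', hxle⟩ := P.mono ha hc hx
    obtain ⟨y', hy', hyle⟩ := P.mono le_rfl hxle hy
    obtain ⟨z', hz', hzle⟩ := P.mono le_rfl hxle hz
    obtain ⟨u', hu', hule⟩ := hf hzle hfz
    refine ⟨us' ++ [u'], ?_, ?_⟩
    · intro i
      have hilen : (i : ℕ) < us'.length + 1 := by simpa using i.2
      rcases Nat.lt_or_ge (i : ℕ) us'.length with hi | hi
      · obtain ⟨x₂, y₂, z₂, hx₂, hy₂, hyb₂, hz₂, hfz₂⟩ := hI ⟨i, hi⟩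
        refine ⟨x₂, y₂, z₂, ?_, hy₂, hyb₂, hz₂, ?_⟩
        · rwa [List.take_append_of_le_length (le_of_lt hi)]
        · simp only [List.get_eq_getElem] at hfz₂ ⊢
          rwa [List.getElem_append_left hi]
      · have hieq : (i : ℕ) = us'.length := by omega
        refine ⟨x', y', z', ?_, hy', hyle.trans hyb, hz', ?_⟩
        · rw [hieq, List.take_left]; exact hx'
        · have hg : (us' ++ [u']).get i = u' := by
            simp only [List.get_eq_getElem]
            rw [List.getElem_append_right hi]
            simp [hieq]
          rw [hg]; exact hu'
    · rw [List.take_succ, List.getElem?_eq_getElem h1']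
      simp only [List.get_eq_getElem] at hule
      exact List.rel_append hF (by simpa using hule)

/-- For a non-semitrivial PCA `A` and `f ∈ BA`, the oracle
application `⊙_f` is deterministic, and `(A, ⊙_f, ≤)` is a partial applicative
poset. -/
theorem odot_PAP {A : Type*} [PartialOrder A] (P : PCA A)
    (top bot p₀ p₁ : A)
    (hnontriv : ¬ ∃ u : A, u ≤ top ∧ u ≤ bot)
    (code : List A → A)
    (hcode : ∀ l l' : List A, List.Forall₂ (· ≤ ·) l' l → code l' ≤ code l)
    (f : A → Option A) (hf : IsBA f) :
    (∀ a b c c' : A, OdotEq P code p₀ p₁ top bot f a b c →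
      OdotEq P code p₀ p₁ top bot f a b c' → c = c') ∧
    (∀ ⦃a' a b' b c : A⦄, a' ≤ a → b' ≤ b → OdotEq P code p₀ p₁ top bot f a b c →
      ∃ c', OdotEq P code p₀ p₁ top bot f a' b' c' ∧ c' ≤ c) := by
  constructor
  · rintro a b c c' ⟨us, hus, x, y, hx, hy, hyt, hp1⟩ ⟨vs, hvs, x', y', hx', hy', hyt', hp1'⟩
    have heq : us = vs := by
      rcases le_total us.length vs.length with hl | hl
      · exact interrog_eq P code hnontriv hus hvs hx hy hyt hl
      · exact (interrog_eq P code hnontriv hvs hus hx' hy' hyt' hl).symm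
    subst heq
    have hxx : x = x' := by rw [hx] at hx'; exact Option.some.inj hx'
    subst hxx
    rw [hp1] at hp1'; exact Option.some.inj hp1'
  · rintro a' a b' b c ha hb ⟨us, hus, x, y, hx, hy, hyt, hp1⟩
    obtain ⟨us', hI, hF⟩ := interrog_mono P code hcode hf ha hb hus us.length le_rfl
    rw [List.take_length] at hF
    have hc : code (b' :: us') ≤ code (b :: us) := hcode _ _ (List.Forall₂.cons hb hF)
    obtain ⟨x', hx', hxle⟩ := P.mono ha hc hx
    obtain ⟨y', hy', hyle⟩ := P.mono le_rfl hxle hy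
    obtain ⟨c', hc', hcle⟩ := P.mono le_rfl hxle hp1
    exact ⟨c', ⟨us', hI, x', y', hx', hy', hyle.trans hyt, hc'⟩, hcle⟩
end

section
/- Let A be a chain-complete PCA, g : A ⇀ B a decidable, chain-continuous partial applicative morphism, and h : BA ⇀ B defined by h(α) = {b ∈ B | b represents α w.r.t. g}. Then h is chain-continuous: for every chain {α_i} in BA with meet α, h(α) = ⋂_i h(α_i). That is, an element b ∈ B represents the greatest lower bound of a chain of partial functions w.r.t. g if and only if it represents every member of the chain. -/
/-- Chain-completeness: every non-empty chain has a greatest lower bound. -/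
def ChainComplete (A : Type*) [PartialOrder A] : Prop :=
  ∀ C : Set A, C.Nonempty → IsChain (· ≤ ·) C → ∃ g : A, IsGLB C g

/-- `b` represents the partial function `α` w.r.t. the morphism with map `gmap`:
for `a ∈ dom α`, `b·gmap a` is defined and contained in `gmap (α a)`. -/
def Represents {A B : Type*} [PartialOrder B] (Q : PCA B)
    (gmap : A → Set B) (b : B) (α : A → Option A) : Prop :=
  ∀ ⦃a c : A⦄, α a = some c → ∀ ⦃x : B⦄, x ∈ gmap a →
    ∃ d, Q.app b x = some d ∧ d ∈ gmap c

/-- Chain-continuity of a morphism: it sends greatest lower bounds of non-empty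
chains to the intersection of the values. -/
def ChainCont {A B : Type*} [PartialOrder A] (gmap : A → Set B) : Prop :=
  ∀ C : Set A, C.Nonempty → IsChain (· ≤ ·) C → ∀ m : A, IsGLB C m →
    gmap m = ⋂ a ∈ C, gmap a

/-- Decidability of a morphism: some `d ∈ B#` sends `g(⊤_A)` into `↓⊤_B` and
`g(⊥_A)` into `↓⊥_B` (where `⊤ = k` and `⊥ = k·(s·k·k)`). -/
def DecidableM {A B : Type*} [PartialOrder A] [PartialOrder B]
    (P : PCA A) (Q : PCA B) (botA : A) (botB : B) (gmap : A → Set B) : Prop :=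
  ∃ d ∈ Q.filt, (∀ b ∈ gmap P.k, ∃ e, Q.app d b = some e ∧ e ≤ Q.k) ∧
    (∀ b ∈ gmap botA, ∃ e, Q.app d b = some e ∧ e ≤ botB)

/-- For a chain-complete `A` and a decidable chain-continuous
partial applicative morphism `g : A ⇀ B`, the map `h(α) = {b | b represents α
w.r.t. g}` is chain-continuous: `b` represents the greatest lower bound of a
chain in `BA` iff it represents every member of the chain. -/
theorem represents_glb_iff {A B : Type*} [PartialOrder A] [PartialOrder B]
    (P : PCA A) (Q : PCA B) (hcc : ChainComplete A) (g : PAM P Q)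
    (iA botA : A)
    (hiA : OApp P.app (OApp P.app (some P.s) (some P.k)) (some P.k) = some iA)
    (hbotA : P.app P.k iA = some botA)
    (iB botB : B)
    (hiB : OApp Q.app (OApp Q.app (some Q.s) (some Q.k)) (some Q.k) = some iB)
    (hbotB : Q.app Q.k iB = some botB)
    (hdec : DecidableM P Q botA botB g.map)
    (hcont : ChainCont g.map)
    (C : Set {α : A → Option A // IsBA α}) (hne : C.Nonempty)
    (hchain : ∀ β ∈ C, ∀ γ ∈ C, BAle β.1 γ.1 ∨ BAle γ.1 β.1)
    (α : {α : A → Option A // IsBA α})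
    (hlb : ∀ β ∈ C, BAle α.1 β.1)
    (hglb : ∀ γ : {α : A → Option A // IsBA α},
      (∀ β ∈ C, BAle γ.1 β.1) → BAle γ.1 α.1) :
    {b : B | Represents Q g.map b α.1} =
      ⋂ β ∈ C, {b : B | Represents Q g.map b β.1} := by
  classical
  set S : A → Set A := fun a => {c | ∃ β ∈ C, β.1 a = some c} with hS
  -- g.map is monotone
  have gmono : ∀ ⦃c c' : A⦄, c ≤ c' → g.map c ⊆ g.map c' := by
    intro c c' hle x hx
    have hch : IsChain (· ≤ ·) ({c, c'} : Set A) := by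
      intro u hu v hv huv
      rcases hu with rfl | rfl <;> rcases hv with rfl | rfl
      · exact Or.inl le_rfl
      · exact Or.inl hle
      · exact Or.inr hle
      · exact Or.inl le_rfl
    have hg : IsGLB ({c, c'} : Set A) c := by
      constructor
      · rintro u (rfl | rfl)
        · exact le_rfl
        · exact hle
      · intro y hy
        exact hy (by simp)
    have := hcont {c, c'} ⟨c, by simp⟩ hch c hg
    rw [this] at hx
    exact Set.mem_iInter₂.mp hx c' (by simp)
  -- pointwise values form a chain
  have hSchain : ∀ a, IsChain (· ≤ ·) (S a) := by
    intro a x hx y hy hxy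
    obtain ⟨β, hβ, hβx⟩ := hx
    obtain ⟨γ, hγ, hγy⟩ := hy
    rcases hchain β hβ γ hγ with h | h
    · obtain ⟨c', hc', hle⟩ := h hγy
      rw [hβx] at hc'
      obtain rfl := Option.some_inj.mp hc'
      exact Or.inl hle
    · obtain ⟨c', hc', hle⟩ := h hβx
      rw [hγy] at hc'
      obtain rfl := Option.some_inj.mp hc'
      exact Or.inr hle
  -- the pointwise meet function
  let γfun : A → Option A := fun a =>
    if h : (S a).Nonempty then some (hcc (S a) h (hSchain a)).choose else none
  have hγval : ∀ a (h : (S a).Nonempty),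
      γfun a = some (hcc (S a) h (hSchain a)).choose := by
    intro a h; simp only [γfun, dif_pos h]
  have hγglb : ∀ a (h : (S a).Nonempty),
      IsGLB (S a) ((hcc (S a) h (hSchain a)).choose) :=
    fun a h => (hcc (S a) h (hSchain a)).choose_spec
  have hγsome : ∀ ⦃a m : A⦄, γfun a = some m →
      ∃ h : (S a).Nonempty, m = (hcc (S a) h (hSchain a)).choose := by
    intro a m hm
    by_cases h : (S a).Nonempty
    · refine ⟨h, ?_⟩
      rw [hγval a h] at hm
      exact (Option.some_inj.mp hm).symm
    · simp only [γfun, dif_neg h] at hm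
      exact absurd hm (by simp)
  have hγBA : IsBA γfun := by
    intro a b hab c hbc
    obtain ⟨hb, rfl⟩ := hγsome hbc
    have hane : (S a).Nonempty := by
      obtain ⟨cb, β, hβ, hβb⟩ := hb
      obtain ⟨c', hc', _⟩ := β.2 hab hβb
      exact ⟨c', β, hβ, hc'⟩
    refine ⟨(hcc (S a) hane (hSchain a)).choose, hγval a hane, ?_⟩
    refine (hγglb b hb).2 ?_
    intro cb hcb
    obtain ⟨β, hβ, hβb⟩ := hcb
    obtain ⟨c', hc', hle⟩ := β.2 hab hβb
    exact le_trans ((hγglb a hane).1 ⟨β, hβ, hc'⟩) hle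
  -- γfun is a lower bound of C
  have hγlow : ∀ β ∈ C, BAle γfun β.1 := by
    intro β hβ a c hβa
    have hane : (S a).Nonempty := ⟨c, β, hβ, hβa⟩
    exact ⟨_, hγval a hane, (hγglb a hane).1 ⟨β, hβ, hβa⟩⟩
  have hγα : BAle γfun α.1 := hglb ⟨γfun, hγBA⟩ hγlow
  -- α is the pointwise glb
  have hkey : ∀ ⦃a c : A⦄, α.1 a = some c → (S a).Nonempty ∧ IsGLB (S a) c := by
    intro a c hαa
    obtain ⟨m, hm, hmc⟩ := hγα hαa
    obtain ⟨h, rfl⟩ := hγsome hm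
    have hclb : c ∈ lowerBounds (S a) := by
      intro c' hc'
      obtain ⟨β, hβ, hβa⟩ := hc'
      obtain ⟨c'', hc'', hle⟩ := hlb β hβ hβa
      rw [hαa] at hc''
      obtain rfl := Option.some_inj.mp hc''
      exact hle
    have hcm : c = (hcc (S a) h (hSchain a)).choose :=
      le_antisymm ((hγglb a h).2 hclb) hmc
    exact ⟨h, hcm ▸ hγglb a h⟩
  ext b
  simp only [Set.mem_setOf_eq, Set.mem_iInter]
  constructor
  · intro hb β hβ a cβ hβa x hx
    obtain ⟨c, hc, hcle⟩ := hlb β hβ hβa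
    obtain ⟨d, hd, hdm⟩ := hb hc hx
    exact ⟨d, hd, gmono hcle hdm⟩
  · intro hb a c hαa x hx
    obtain ⟨hane, hglbc⟩ := hkey hαa
    obtain ⟨c0, β0, hβ0, hβ0a⟩ := hane
    obtain ⟨d, hd, _⟩ := hb β0 hβ0 hβ0a hx
    refine ⟨d, hd, ?_⟩
    rw [hcont (S a) ⟨c0, β0, hβ0, hβ0a⟩ (hSchain a) c hglbc]
    refine Set.mem_iInter₂.mpr ?_
    intro c' hc'
    obtain ⟨β, hβ, hβa⟩ := hc'
    obtain ⟨d', hd', hd'm⟩ := hb β hβ hβa hx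
    rw [hd] at hd'
    obtain rfl := Option.some_inj.mp hd'
    exact hd'm
end

section
/- Let A be a chain-complete PCA, g : A ⇀ B a decidable chain-continuous partial applicative morphism, F : BA → BA a total order-preserving function, and h(α) = {b ∈ B | b represents α w.r.t. g}. If r ∈ B represents F w.r.t. h (i.e., r·h(α) ⊆ h(F(α)) for all α), then z·r represents the largest fixpoint of F w.r.t. g, where z ∈ B# is the guarded fixpoint combinator. Consequently, if F is effectively representable w.r.t. h, then the largest fixpoint of F is effectively representable w.r.t. g. -/
/-! The functions represented by `z·r` form a subset `T` of `BA` that is closed under `F`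
(because `z·r·x ≼ r·(z·r)·x`) and under infima of chains (by chain-continuity of `g`; the
empty chain gives the everywhere-undefined function, which every element represents). Such a set
contains the greatest fixpoint `fp`: by Zorn's lemma, `{x ∈ T | fp ≤ x ∧ F x ≤ x}` has a minimal
element `m`; since `F m` lies in this set as well, `m ≤ F m`, so `m ≤ fp` and hence `m = fp`. -/

theorem gfp_scott_induction {α : Type*} [PartialOrder α] {f : α → α} (hf : Monotone f)
    {T : Set α} (hT_chain : ∀ c ⊆ T, IsChain (· ≤ ·) c → ∃ m ∈ T, IsGLB c m)
    (hT_map : ∀ x ∈ T, f x ∈ T) {p : α} (hp : f p = p) (hp_max : ∀ x, x ≤ f x → x ≤ p) :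
    p ∈ T := by
  set S := {x | x ∈ T ∧ p ≤ x ∧ f x ≤ x}
  obtain ⟨m, ⟨hmT, hpm, hfm⟩, hmin⟩ : ∃ m, Minimal (· ∈ S) m := zorn_le₀ (α := αᵒᵈ) S <| by
    intro c hcS hc
    obtain ⟨m, hmT, hglb⟩ := hT_chain c (fun x hx => (hcS hx).1) hc.symm
    refine ⟨m, ⟨hmT, hglb.2 fun x hx => (hcS hx).2.1, hglb.2 fun x hx => ?_⟩, hglb.1⟩
    exact (hf (hglb.1 hx)).trans (hcS hx).2.2
  have hfmS : f m ∈ S := ⟨hT_map m hmT, hp ▸ hf hpm, hf hfm⟩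
  have hm_le : m ≤ f m := hmin hfmS hfm
  rwa [le_antisymm (hp_max m hm_le) hpm] at hmT

lemma BAle.apply_le {A : Type*} [PartialOrder A] {α β : A → Option A} (h : BAle α β)
    {a v w : A} (hv : α a = some v) (hw : β a = some w) : v ≤ w := by
  obtain ⟨v', hv', hle⟩ := h hw
  rw [hv, Option.some_inj] at hv'
  exact hv' ▸ hle

def BA (A : Type*) [PartialOrder A] : Type _ := {α : A → Option A // IsBA α}

namespace BA

variable {A : Type*} [PartialOrder A]

instance : PartialOrder (BA A) where
  le α β := BAle α.1 β.1
  le_refl _ _ c hc := ⟨c, hc, le_rfl⟩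
  le_trans _ _ _ h₁ h₂ _ _ hc :=
    let ⟨_, hc', h'⟩ := h₂ hc
    let ⟨c'', hc'', h''⟩ := h₁ hc'
    ⟨c'', hc'', h''.trans h'⟩
  le_antisymm α β h₁ h₂ := Subtype.ext <| funext fun a => by
    cases hα : α.1 a with
    | none => cases hβ : β.1 a with
      | none => rfl
      | some w => obtain ⟨_, h, -⟩ := h₁ hβ; simp [hα] at h
    | some v => cases hβ : β.1 a with
      | none => obtain ⟨_, h, -⟩ := h₂ hα; simp [hβ] at h
      | some w =>
        rw [le_antisymm (h₁.apply_le hα hβ) (h₂.apply_le hβ hα)]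

def values (c : Set (BA A)) (a : A) : Set A := {v | ∃ α ∈ c, α.1 a = some v}

variable {c : Set (BA A)}

lemma isChain_values (hc : IsChain (· ≤ ·) c) (a : A) : IsChain (· ≤ ·) (values c a) := by
  rintro v ⟨α, hα, hv⟩ w ⟨β, hβ, hw⟩ -
  rcases hc.total hα hβ with h | h
  · exact Or.inl (h.apply_le hv hw)
  · exact Or.inr (h.apply_le hw hv)

open Classical in
noncomputable def chainInfFun (hcc : ChainComplete A) (hc : IsChain (· ≤ ·) c) (a : A) :
    Option A :=
  if h : (values c a).Nonempty then some (hcc _ h (isChain_values hc a)).choose else none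

lemma chainInfFun_eq_some_iff (hcc : ChainComplete A) (hc : IsChain (· ≤ ·) c) {a x : A} :
    chainInfFun hcc hc a = some x ↔ (values c a).Nonempty ∧ IsGLB (values c a) x := by
  unfold chainInfFun
  split_ifs with h
  · have hglb := (hcc _ h (isChain_values hc a)).choose_spec
    exact ⟨fun hx => ⟨h, Option.some_inj.mp hx ▸ hglb⟩,
      fun hx => congrArg some (hglb.unique hx.2)⟩
  · simp [h]

lemma isBA_chainInfFun (hcc : ChainComplete A) (hc : IsChain (· ≤ ·) c) :
    IsBA (chainInfFun hcc hc) := by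
  intro a b hab x hx
  obtain ⟨⟨v₀, α₀, hα₀, hv₀⟩, hglb_b⟩ := (chainInfFun_eq_some_iff hcc hc).mp hx
  obtain ⟨w₀, hw₀, -⟩ := α₀.2 hab hv₀
  have hne : (values c a).Nonempty := ⟨w₀, α₀, hα₀, hw₀⟩
  obtain ⟨y, hglb_a⟩ := hcc _ hne (isChain_values hc a)
  refine ⟨y, (chainInfFun_eq_some_iff hcc hc).mpr ⟨hne, hglb_a⟩, hglb_b.2 ?_⟩
  rintro v ⟨α, hα, hv⟩
  obtain ⟨w, hw, hwv⟩ := α.2 hab hv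
  exact (hglb_a.1 ⟨α, hα, hw⟩).trans hwv

noncomputable def chainInf (hcc : ChainComplete A) (hc : IsChain (· ≤ ·) c) : BA A :=
  ⟨chainInfFun hcc hc, isBA_chainInfFun hcc hc⟩

lemma isGLB_chainInf (hcc : ChainComplete A) (hc : IsChain (· ≤ ·) c) :
    IsGLB c (chainInf hcc hc) := by
  constructor
  · intro α hα a v hv
    have hne : (values c a).Nonempty := ⟨v, α, hα, hv⟩
    obtain ⟨x, hglb⟩ := hcc _ hne (isChain_values hc a)
    exact ⟨x, (chainInfFun_eq_some_iff hcc hc).mpr ⟨hne, hglb⟩, hglb.1 ⟨α, hα, hv⟩⟩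
  · intro β hβ a x hx
    obtain ⟨⟨v₀, α₀, hα₀, hv₀⟩, hglb⟩ := (chainInfFun_eq_some_iff hcc hc).mp hx
    obtain ⟨w, hw, -⟩ := hβ hα₀ hv₀
    refine ⟨w, hw, hglb.2 ?_⟩
    rintro v ⟨α, hα, hv⟩
    exact (hβ hα).apply_le hw hv

end BA

section Represents

variable {A B : Type*} [PartialOrder A] [PartialOrder B] {P : PCA A} {Q : PCA B}

lemma Represents.of_app_le (g : PAM P Q) {b d : B} {α : A → Option A}
    (hle : ∀ x e, Q.app d x = some e → ∃ e', Q.app b x = some e' ∧ e' ≤ e)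
    (hd : Represents Q g.map d α) : Represents Q g.map b α := by
  intro a c hc x hx
  obtain ⟨e, he, hec⟩ := hd hc hx
  obtain ⟨e', he', hle'⟩ := hle x e he
  exact ⟨e', he', g.down c hle' hec⟩

lemma Represents.chainInf {gmap : A → Set B} (hcont : ChainCont gmap) (hcc : ChainComplete A)
    {c : Set (BA A)} (hc : IsChain (· ≤ ·) c) {b : B} (hb : ∀ α ∈ c, Represents Q gmap b α.1) :
    Represents Q gmap b (BA.chainInf hcc hc).1 := by
  intro a x hx y hy
  obtain ⟨hne, hglb⟩ := (BA.chainInfFun_eq_some_iff hcc hc).mp hx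
  rw [hcont _ hne (BA.isChain_values hc a) x hglb]
  obtain ⟨v₀, α₀, hα₀, hv₀⟩ := hne
  obtain ⟨d, hd, -⟩ := hb α₀ hα₀ hv₀ hy
  refine ⟨d, hd, Set.mem_iInter₂.mpr ?_⟩
  rintro v ⟨α, hα, hv⟩
  obtain ⟨d', hd', hd'v⟩ := hb α hα hv hy
  rw [hd, Option.some_inj] at hd'
  exact hd' ▸ hd'v

lemma Represents.gfp (hcc : ChainComplete A) (g : PAM P Q) (hcont : ChainCont g.map)
    {F : BA A → BA A} (hF : Monotone F) {fp : BA A} (hfp : F fp = fp)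
    (hfp_max : ∀ α, α ≤ F α → α ≤ fp) {r zr : B}
    (hzr : ∀ x e, OApp Q.app (OApp Q.app (some r) (some zr)) (some x) = some e →
      ∃ e', Q.app zr x = some e' ∧ e' ≤ e)
    (hr : ∀ α : BA A, ∀ b : B, Represents Q g.map b α.1 →
      ∃ d, Q.app r b = some d ∧ Represents Q g.map d (F α).1) :
    Represents Q g.map zr fp.1 := by
  have hT_map : ∀ α : BA A, Represents Q g.map zr α.1 → Represents Q g.map zr (F α).1 := by
    intro α hα
    obtain ⟨d, hd, hd_rep⟩ := hr α zr hα
    refine hd_rep.of_app_le g fun x e he => hzr x e ?_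
    simp only [OApp, Option.bind_some, hd, he]
  exact gfp_scott_induction (T := {α | Represents Q g.map zr α.1}) hF
    (fun c hcT hc => ⟨BA.chainInf hcc hc, Represents.chainInf hcont hcc hc hcT,
      BA.isGLB_chainInf hcc hc⟩) hT_map hfp hfp_max

end Represents

theorem fixpoint_representable_general {A B : Type*} [PartialOrder A] [PartialOrder B]
    (P : PCA A) (Q : PCA B) (hcc : ChainComplete A) (g : PAM P Q)
    (hcont : ChainCont g.map)
    (F : {α : A → Option A // IsBA α} → {α : A → Option A // IsBA α})
    (hF : ∀ α β : {α : A → Option A // IsBA α}, BAle α.1 β.1 → BAle (F α).1 (F β).1)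
    -- the guarded fixpoint combinator z ∈ B#: z·a is defined and z·a·b ≼ a·(z·a)·b
    (z : B) (hz_mem : z ∈ Q.filt)
    (hz_def : ∀ a : B, ∃ za, Q.app z a = some za)
    (hz_spec : ∀ a za : B, Q.app z a = some za → ∀ b e : B,
      OApp Q.app (OApp Q.app (some a) (some za)) (some b) = some e →
      ∃ e', Q.app za b = some e' ∧ e' ≤ e)
    -- fp is the largest fixpoint of F
    (fp : {α : A → Option A // IsBA α}) (hfp : F fp = fp)
    (hfp_max : ∀ f' : {α : A → Option A // IsBA α},
      BAle f'.1 (F f').1 → BAle f'.1 fp.1) :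
    (∀ r : B,
      (∀ α : {α : A → Option A // IsBA α}, ∀ b : B, Represents Q g.map b α.1 →
        ∃ d, Q.app r b = some d ∧ Represents Q g.map d (F α).1) →
      ∀ zr : B, Q.app z r = some zr → Represents Q g.map zr fp.1) ∧
    ((∃ r ∈ Q.filt,
      ∀ α : {α : A → Option A // IsBA α}, ∀ b : B, Represents Q g.map b α.1 →
        ∃ d, Q.app r b = some d ∧ Represents Q g.map d (F α).1) →
      ∃ s ∈ Q.filt, Represents Q g.map s fp.1) := by
  have main := fun r hr zr hzr =>
    Represents.gfp (F := F) hcc g hcont hF hfp hfp_max (hz_spec r zr hzr) hr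
  refine ⟨main, ?_⟩
  rintro ⟨r, hr_mem, hr⟩
  obtain ⟨zr, hzr⟩ := hz_def r
  exact ⟨zr, Q.filt_app hz_mem hr_mem hzr, main r hr zr hzr⟩

/-- Let `g : A ⇀ B` be decidable and chain-continuous, `A`
chain-complete, `F : BA → BA` total and order-preserving, and let
`h(α) = {b | b represents α w.r.t. g}`. If `r` represents `F` w.r.t. `h`
(`r·h(α) ⊆ h(F(α))`), then `z·r` represents the largest fixpoint of `F` w.r.t. `g`,
where `z ∈ B#` is the guarded fixpoint combinator. Consequently, if `F` is
effectively representable w.r.t. `h`, then the largest fixpoint of `F` is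
effectively representable w.r.t. `g`. -/
theorem fixpoint_representable {A B : Type*} [PartialOrder A] [PartialOrder B]
    (P : PCA A) (Q : PCA B) (hcc : ChainComplete A) (g : PAM P Q)
    (iA botA : A)
    (hiA : OApp P.app (OApp P.app (some P.s) (some P.k)) (some P.k) = some iA)
    (hbotA : P.app P.k iA = some botA)
    (iB botB : B)
    (hiB : OApp Q.app (OApp Q.app (some Q.s) (some Q.k)) (some Q.k) = some iB)
    (hbotB : Q.app Q.k iB = some botB)
    (hdec : DecidableM P Q botA botB g.map)
    (hcont : ChainCont g.map)
    (F : {α : A → Option A // IsBA α} → {α : A → Option A // IsBA α})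
    (hF : ∀ α β : {α : A → Option A // IsBA α}, BAle α.1 β.1 → BAle (F α).1 (F β).1)
    -- the guarded fixpoint combinator z ∈ B#: z·a is defined and z·a·b ≼ a·(z·a)·b
    (z : B) (hz_mem : z ∈ Q.filt)
    (hz_def : ∀ a : B, ∃ za, Q.app z a = some za)
    (hz_spec : ∀ a za : B, Q.app z a = some za → ∀ b e : B,
      OApp Q.app (OApp Q.app (some a) (some za)) (some b) = some e →
      ∃ e', Q.app za b = some e' ∧ e' ≤ e)
    -- fp is the largest fixpoint of F
    (fp : {α : A → Option A // IsBA α}) (hfp : F fp = fp)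
    (hfp_max : ∀ f' : {α : A → Option A // IsBA α},
      BAle f'.1 (F f').1 → BAle f'.1 fp.1) :
    (∀ r : B,
      (∀ α : {α : A → Option A // IsBA α}, ∀ b : B, Represents Q g.map b α.1 →
        ∃ d, Q.app r b = some d ∧ Represents Q g.map d (F α).1) →
      ∀ zr : B, Q.app z r = some zr → Represents Q g.map zr fp.1) ∧
    ((∃ r ∈ Q.filt,
      ∀ α : {α : A → Option A // IsBA α}, ∀ b : B, Represents Q g.map b α.1 →
        ∃ d, Q.app r b = some d ∧ Represents Q g.map d (F α).1) →
      ∃ s ∈ Q.filt, Represents Q g.map s fp.1) :=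
  fixpoint_representable_general P Q hcc g hcont F hF z hz_mem hz_def hz_spec fp hfp hfp_max
end
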